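/- arXiv:1311.2325 — 4 statements merged into one kernel-verified Lean document; each statement's English description precedes it below -/
import Mathlib

section
/- With J_N := J_N(1) defined as the iterated simplex integral ∫_{1≥t_2≥⋯≥t_{N+1}≥0} ∏_{i=2}^{N+1} (∑_{j=1}^{i-1} 1/√(t_j−t_i)) dt_2⋯dt_{N+1} (t_1 := 1), one has the lower bound J_N ≥ 2^N. -/
open MeasureTheory

/-- `tval N t s j` is the value `t_{j+1}` in the paper's notation: `tval _ t _ 0 = t_1 = t`
and `tval N t s (j+1) = t_{j+2} = s j`. -/
noncomputable def tval (N : ℕ) (t : ℝ) (s : Fin N → ℝ) : ℕ → ℝ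
  | 0 => t
  | j + 1 => if h : j < N then s ⟨j, h⟩ else 0

/-- The simplex `t ≥ t_2 ≥ t_3 ≥ ⋯ ≥ t_{N+1} ≥ 0` (here `s i = t_{i+2}`). -/
def simplexSet (N : ℕ) (t : ℝ) : Set (Fin N → ℝ) :=
  {s | (∀ i, 0 ≤ s i) ∧ (∀ i j : Fin N, i ≤ j → s j ≤ s i) ∧ (∀ i, s i ≤ t)}

/-- `J N t = ∫_{t ≥ t_2 ≥ ⋯ ≥ t_{N+1} ≥ 0} ∏_{i=2}^{N+1} (∑_{j=1}^{i-1} 1/√(t_j - t_i))`. -/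
noncomputable def Jfun (N : ℕ) (t : ℝ) : ℝ :=
  ∫ s in simplexSet N t, ∏ i : Fin N,
    ∑ j ∈ Finset.range (i.val + 1), 1 / Real.sqrt (tval N t s j - tval N t s (i.val + 1))

/-!
Off a null set the points `1 = t_1 ≥ t_2 ≥ ⋯ ≥ t_{N+1} ≥ 0` are distinct, and then each of the
`i - 1` terms of the `i`-th factor of the integrand lies between `(1 - t_i)^{-1/2}` and
`(t_{i-1} - t_i)^{-1/2}`. Hence the integrand lies between `N! ∏ (1 - t_i)^{-1/2}` and
`N! ∏ (t_{i-1} - t_i)^{-1/2}`.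

The lower function is symmetric in `t_2, …, t_{N+1}`, and the `N!` reorderings of the simplex
cover the cube `[0,1]^N`, so `N!` times its simplex integral is at least its cube integral
`(∫₀¹ (1 - x)^{-1/2} dx)^N = 2^N`. The upper function becomes `∏ u_i^{-1/2}` under the
volume-preserving affine change of variables to the gaps `u_i = t_{i-1} - t_i`, which maps the
simplex into the cube; so the integrand is integrable, without which the Bochner integral in
`Jfun` would be `0`.
-/

open Set
open scoped ENNReal Nat

variable {N : ℕ} {t : ℝ} {s : Fin N → ℝ}

@[simp]
lemma tval_zero (N : ℕ) (t : ℝ) (s : Fin N → ℝ) : tval N t s 0 = t := rfl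

@[simp]
lemma tval_val_succ (i : Fin N) : tval N t s (i + 1) = s i := by
  simp [tval]

lemma tval_antitone (hs : s ∈ simplexSet N t) {j k : ℕ} (hjk : j ≤ k) (hk : k ≤ N) :
    tval N t s k ≤ tval N t s j := by
  obtain ⟨-, hs_anti, hs_le⟩ := hs
  match j, k, hjk, hk with
  | 0, 0, _, _ => exact le_rfl
  | 0, k + 1, _, hk => exact tval_val_succ (i := ⟨k, hk⟩) ▸ hs_le _
  | j + 1, k + 1, hjk, hk =>
    rw [tval_val_succ (i := ⟨k, hk⟩), tval_val_succ (i := ⟨j, by omega⟩)]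
    exact hs_anti _ _ (Fin.mk_le_mk.2 (by omega))

lemma tval_add (N : ℕ) (t t' : ℝ) (s s' : Fin N → ℝ) (j : ℕ) :
    tval N (t + t') (s + s') j = tval N t s j + tval N t' s' j := by
  cases j <;> simp only [tval]; split_ifs <;> simp

lemma tval_smul (N : ℕ) (c t : ℝ) (s : Fin N → ℝ) (j : ℕ) :
    tval N (c * t) (c • s) j = c * tval N t s j := by
  cases j <;> simp only [tval]; split_ifs <;> simp

@[fun_prop]
lemma measurable_tval (N : ℕ) (t : ℝ) (j : ℕ) : Measurable fun s : Fin N → ℝ => tval N t s j := by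
  cases j
  · exact measurable_const
  · simp only [tval]; split_ifs <;> fun_prop

lemma measurableSet_simplexSet (N : ℕ) (t : ℝ) : MeasurableSet (simplexSet N t) := by
  simp only [simplexSet, ofPred_and, ofPred_forall]
  measurability

noncomputable def gapMap (N : ℕ) (t : ℝ) (s : Fin N → ℝ) : Fin N → ℝ :=
  fun i => tval N t s i - tval N t s (i + 1)

lemma gapMap_mem_pi_Icc (hs : s ∈ simplexSet N t) :
    gapMap N t s ∈ univ.pi fun _ => Icc 0 t := by
  intro i _
  have h_succ := tval_antitone hs (Nat.le_succ i) i.isLt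
  have h_le := tval_antitone hs (Nat.zero_le i) i.isLt.le
  simp only [gapMap, tval_val_succ, tval_zero] at h_succ h_le ⊢
  exact ⟨sub_nonneg.2 h_succ, by linarith [hs.1 i]⟩

noncomputable def gapLinearMap (N : ℕ) : (Fin N → ℝ) →ₗ[ℝ] Fin N → ℝ where
  toFun := gapMap N 0
  map_add' s s' := by
    have h := tval_add N 0 0 s s'
    rw [add_zero] at h
    ext i; simp only [gapMap, Pi.add_apply, h]; ring
  map_smul' c s := by
    have h := tval_smul N c 0 s
    rw [mul_zero] at h
    ext i; simp only [gapMap, Pi.smul_apply, h, RingHom.id_apply, smul_eq_mul]; ring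

lemma gapMap_eq_add (N : ℕ) (t : ℝ) (s : Fin N → ℝ) :
    gapMap N t s = gapMap N t 0 + gapLinearMap N s := by
  have h := tval_add N t 0 0 s
  rw [add_zero, zero_add] at h
  ext i; simp only [gapLinearMap, LinearMap.coe_mk, AddHom.coe_mk, gapMap, Pi.add_apply, h]; ring

lemma gapLinearMap_single_apply_of_le {i j : Fin N} (hij : i ≤ j) :
    gapLinearMap N (Pi.single j 1) i = if i = j then -1 else 0 := by
  have h_prev : tval N 0 (Pi.single j 1) i = 0 := by
    obtain ⟨_ | k, hk⟩ := i
    · rfl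
    · simp only [tval, Pi.single_apply, Fin.ext_iff, Fin.le_def] at hij ⊢
      split_ifs <;> first | rfl | omega
  simp only [gapLinearMap, LinearMap.coe_mk, AddHom.coe_mk, gapMap, tval_val_succ, h_prev,
    Pi.single_apply]
  split_ifs <;> simp

lemma det_gapLinearMap (N : ℕ) : LinearMap.det (gapLinearMap N) = (-1) ^ N := by
  rw [← LinearMap.det_toMatrix', Matrix.det_of_isLowerTriangular]
  · simp [LinearMap.toMatrix'_apply, gapLinearMap_single_apply_of_le]
  · intro i j (hij : i < j)
    simp [LinearMap.toMatrix'_apply, gapLinearMap_single_apply_of_le hij.le, hij.ne]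

lemma measurePreserving_gapMap (N : ℕ) (t : ℝ) :
    MeasurePreserving (gapMap N t) (volume : Measure (Fin N → ℝ)) volume := by
  have h_det : LinearMap.det (gapLinearMap N) ≠ 0 := by
    rw [det_gapLinearMap]; exact pow_ne_zero _ (by norm_num)
  have h_lin : MeasurePreserving (gapLinearMap N) (volume : Measure (Fin N → ℝ)) volume := by
    refine ⟨(gapLinearMap N).continuous_of_finiteDimensional.measurable, ?_⟩
    rw [Measure.map_linearMap_addHaar_eq_smul_addHaar volume h_det, det_gapLinearMap]
    simp
  rw [funext (gapMap_eq_add N t)]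
  exact (measurePreserving_add_left volume _).comp h_lin

lemma setLIntegral_simplexSet_comp_gapMap_le (G : (Fin N → ℝ) → ℝ≥0∞) (hG : Measurable G) :
    ∫⁻ s in simplexSet N t, G (gapMap N t s) ≤ ∫⁻ u in univ.pi fun _ => Icc 0 t, G u :=
  calc ∫⁻ s in simplexSet N t, G (gapMap N t s)
      ≤ ∫⁻ s in gapMap N t ⁻¹' univ.pi fun _ => Icc 0 t, G (gapMap N t s) :=
        lintegral_mono_set fun _ hs => gapMap_mem_pi_Icc hs
    _ = ∫⁻ u in univ.pi fun _ => Icc 0 t, G u :=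
        (measurePreserving_gapMap N t).setLIntegral_comp_preimage
          (MeasurableSet.univ_pi fun _ => measurableSet_Icc) hG

lemma ae_gapMap_ne_zero (N : ℕ) (t : ℝ) : ∀ᵐ s : Fin N → ℝ, ∀ i, gapMap N t s i ≠ 0 := by
  refine (measurePreserving_gapMap N t).quasiMeasurePreserving.ae (p := fun u => ∀ i, u i ≠ 0) ?_
  refine ae_all_iff.2 fun i => (measure_eq_zero_iff_ae_notMem (s := {u : Fin N → ℝ | u i = 0})).1 ?_
  simpa [volume_pi] using Measure.pi_hyperplane (fun _ : Fin N => (volume : Measure ℝ)) i 0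

lemma ae_restrict_simplexSet_gapMap_pos (N : ℕ) (t : ℝ) :
    ∀ᵐ s ∂volume.restrict (simplexSet N t), s ∈ simplexSet N t ∧ ∀ i, 0 < gapMap N t s i := by
  filter_upwards [ae_restrict_mem (measurableSet_simplexSet N t),
    ae_restrict_of_ae (ae_gapMap_ne_zero N t)] with s hs h_ne
  exact ⟨hs, fun i => ((gapMap_mem_pi_Icc hs) i (mem_univ i)).1.lt_of_ne' (h_ne i)⟩

lemma pi_Icc_subset_iUnion_preimage_simplexSet (N : ℕ) (t : ℝ) :
    (univ.pi fun _ => Icc 0 t) ⊆ ⋃ σ : Equiv.Perm (Fin N), (· ∘ σ) ⁻¹' simplexSet N t := by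
  intro s hs
  simp only [mem_univ_pi, mem_Icc] at hs
  refine mem_iUnion.2 ⟨Fin.revPerm.trans (Tuple.sort s), fun i => (hs _).1,
    fun i j hij => Tuple.monotone_sort s (Fin.rev_le_rev.2 hij), fun i => (hs _).2⟩

lemma setLIntegral_preimage_comp_perm (σ : Equiv.Perm (Fin N)) (S : Set (Fin N → ℝ))
    (h : (Fin N → ℝ) → ℝ≥0∞) :
    ∫⁻ s in (· ∘ σ) ⁻¹' S, h (s ∘ σ) = ∫⁻ s in S, h s :=
  (volume_preserving_arrowCongr' σ.symm (MeasurableEquiv.refl ℝ) (MeasurePreserving.id volume)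
    ).setLIntegral_comp_preimage_emb (MeasurableEquiv.measurableEmbedding _) h S

lemma lintegral_pi_Icc_le_factorial_mul (h : (Fin N → ℝ) → ℝ≥0∞)
    (h_perm : ∀ (σ : Equiv.Perm (Fin N)) s, h (s ∘ σ) = h s) :
    ∫⁻ s in univ.pi fun _ => Icc 0 t, h s ≤ N ! * ∫⁻ s in simplexSet N t, h s :=
  calc ∫⁻ s in univ.pi fun _ => Icc 0 t, h s
      ≤ ∫⁻ s in ⋃ σ : Equiv.Perm (Fin N), (· ∘ σ) ⁻¹' simplexSet N t, h s :=
        lintegral_mono_set (pi_Icc_subset_iUnion_preimage_simplexSet N t)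
    _ ≤ ∑' σ : Equiv.Perm (Fin N), ∫⁻ s in (· ∘ σ) ⁻¹' simplexSet N t, h s :=
        lintegral_iUnion_le _ _
    _ = ∑' _ : Equiv.Perm (Fin N), ∫⁻ s in simplexSet N t, h s := tsum_congr fun σ => by
        simpa only [h_perm] using setLIntegral_preimage_comp_perm σ (simplexSet N t) h
    _ = N ! * ∫⁻ s in simplexSet N t, h s := by
        rw [tsum_fintype, Finset.sum_const, Finset.card_univ, Fintype.card_perm, Fintype.card_fin,
          nsmul_eq_mul]

lemma one_div_sqrt_eq_rpow {x : ℝ} (hx : 0 ≤ x) : 1 / √x = x ^ (-(1 / 2) : ℝ) := by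
  rw [Real.sqrt_eq_rpow, Real.rpow_neg hx, one_div]

lemma one_div_sqrt_le_one_div_sqrt {a b : ℝ} (ha : 0 < a) (hab : a ≤ b) : 1 / √b ≤ 1 / √a :=
  one_div_le_one_div_of_le (Real.sqrt_pos.2 ha) (Real.sqrt_le_sqrt hab)

lemma integrableOn_one_div_sqrt : IntegrableOn (fun x : ℝ => 1 / √x) (Icc 0 1) := by
  have h :=
    intervalIntegral.intervalIntegrable_rpow' (a := 0) (b := 1) (r := -(1 / 2)) (by norm_num)
  rw [intervalIntegrable_iff_integrableOn_Ioc_of_le zero_le_one] at h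
  rw [integrableOn_Icc_iff_integrableOn_Ioc]
  exact h.congr_fun (fun x hx => (one_div_sqrt_eq_rpow hx.1.le).symm) measurableSet_Ioc

lemma integral_one_div_sqrt : ∫ x in Icc (0 : ℝ) 1, 1 / √x = 2 := by
  rw [integral_Icc_eq_integral_Ioc,
    setIntegral_congr_fun measurableSet_Ioc fun x hx => one_div_sqrt_eq_rpow hx.1.le,
    ← intervalIntegral.integral_of_le zero_le_one, integral_rpow (by norm_num)]
  norm_num

lemma integrableOn_one_div_sqrt_one_sub : IntegrableOn (fun x : ℝ => 1 / √(1 - x)) (Icc 0 1) := by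
  have h := (Measure.measurePreserving_sub_left volume (1 : ℝ)).integrableOn_comp_preimage
    (measurableEmbedding_subLeft 1) (f := fun x => 1 / √x) (s := Icc 0 1)
  simpa [preimage_const_sub_Icc, Function.comp_def] using h.2 integrableOn_one_div_sqrt

lemma integral_one_div_sqrt_one_sub : ∫ x in Icc (0 : ℝ) 1, 1 / √(1 - x) = 2 := by
  have h := (Measure.measurePreserving_sub_left volume (1 : ℝ)).setIntegral_preimage_emb
    (measurableEmbedding_subLeft 1) (fun x => 1 / √x) (Icc 0 1)
  rwa [preimage_const_sub_Icc, sub_self, sub_zero, integral_one_div_sqrt] at h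

lemma lintegral_pi_prod_ofReal {S : Set ℝ} {f : ℝ → ℝ} (hf_nonneg : ∀ x, 0 ≤ f x)
    (hf : IntegrableOn f S) :
    ∫⁻ s in univ.pi fun _ : Fin N => S, ∏ i, ENNReal.ofReal (f (s i)) =
      ENNReal.ofReal ((∫ x in S, f x) ^ N) := by
  rw [volume_pi, Measure.restrict_pi_pi]
  simp_rw [← ENNReal.ofReal_prod_of_nonneg fun i _ => hf_nonneg _]
  rw [← ofReal_integral_eq_lintegral_ofReal (Integrable.fintype_prod fun _ => hf)
    (ae_of_all _ fun s => Finset.prod_nonneg fun i _ => hf_nonneg _),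
    integral_fintype_prod_eq_pow, Fintype.card_fin]

lemma ofReal_factorial_mul_prod (f : Fin N → ℝ) (hf : ∀ i, 0 ≤ f i) :
    ENNReal.ofReal (N ! * ∏ i, f i) = N ! * ∏ i, ENNReal.ofReal (f i) := by
  rw [ENNReal.ofReal_mul (by positivity), ENNReal.ofReal_natCast,
    ENNReal.ofReal_prod_of_nonneg fun i _ => hf i]

lemma prod_fin_add_one_eq_factorial (N : ℕ) : ∏ i : Fin N, ((i : ℝ) + 1) = N ! := by
  rw [Fin.prod_univ_eq_prod_range (fun k => (k : ℝ) + 1)]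
  exact_mod_cast Finset.prod_range_add_one_eq_factorial N

noncomputable def Jintegrand (N : ℕ) (t : ℝ) (s : Fin N → ℝ) : ℝ :=
  ∏ i : Fin N, ∑ j ∈ Finset.range (i.val + 1), 1 / √(tval N t s j - tval N t s (i.val + 1))

lemma Jintegrand_nonneg (N : ℕ) (t : ℝ) (s : Fin N → ℝ) : 0 ≤ Jintegrand N t s :=
  Finset.prod_nonneg fun _ _ => Finset.sum_nonneg fun _ _ => by positivity

lemma measurable_Jintegrand (N : ℕ) (t : ℝ) : Measurable (Jintegrand N t) := by
  unfold Jintegrand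
  fun_prop

section FactorBounds

variable (hs : s ∈ simplexSet N t) {i : Fin N} (hgap : 0 < gapMap N t s i)
include hs hgap

lemma add_one_mul_le_sum_one_div_sqrt :
    ((i : ℝ) + 1) * (1 / √(t - s i)) ≤
      ∑ j ∈ Finset.range (i + 1), 1 / √(tval N t s j - tval N t s (i + 1)) := by
  calc ((i : ℝ) + 1) * (1 / √(t - s i)) = ∑ _j ∈ Finset.range (i + 1), 1 / √(t - s i) := by simp
    _ ≤ _ := Finset.sum_le_sum fun j hj => one_div_sqrt_le_one_div_sqrt ?_ ?_
  · have hji : j ≤ i := Finset.mem_range_succ_iff.1 hj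
    simpa [gapMap] using hgap.trans_le (sub_le_sub_right (tval_antitone hs hji i.isLt.le) _)
  · simpa using tval_antitone hs (Nat.zero_le j) (Finset.mem_range_succ_iff.1 hj |>.trans i.isLt.le)

lemma sum_one_div_sqrt_le_add_one_mul :
    ∑ j ∈ Finset.range (i + 1), 1 / √(tval N t s j - tval N t s (i + 1)) ≤
      ((i : ℝ) + 1) * (1 / √(gapMap N t s i)) :=
  calc _ ≤ ∑ _j ∈ Finset.range (i + 1), 1 / √(gapMap N t s i) :=
        Finset.sum_le_sum fun j hj => one_div_sqrt_le_one_div_sqrt hgap <| sub_le_sub_right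
          (tval_antitone hs (Finset.mem_range_succ_iff.1 hj) i.isLt.le) _
    _ = _ := by simp

end FactorBounds

lemma factorial_mul_prod_le_Jintegrand (hs : s ∈ simplexSet N t)
    (hgap : ∀ i, 0 < gapMap N t s i) : N ! * ∏ i, 1 / √(t - s i) ≤ Jintegrand N t s := by
  rw [← prod_fin_add_one_eq_factorial, ← Finset.prod_mul_distrib]
  exact Finset.prod_le_prod (fun i _ => by positivity) fun i _ =>
    add_one_mul_le_sum_one_div_sqrt hs (hgap i)

lemma Jintegrand_le_factorial_mul_prod (hs : s ∈ simplexSet N t)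
    (hgap : ∀ i, 0 < gapMap N t s i) : Jintegrand N t s ≤ N ! * ∏ i, 1 / √(gapMap N t s i) := by
  rw [← prod_fin_add_one_eq_factorial, ← Finset.prod_mul_distrib]
  exact Finset.prod_le_prod (fun i _ => Finset.sum_nonneg fun _ _ => by positivity) fun i _ =>
    sum_one_div_sqrt_le_add_one_mul hs (hgap i)

lemma ofReal_two_pow_le_lintegral_Jintegrand (N : ℕ) :
    ENNReal.ofReal (2 ^ N) ≤ ∫⁻ s in simplexSet N 1, ENNReal.ofReal (Jintegrand N 1 s) :=
  calc ENNReal.ofReal (2 ^ N)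
      = ∫⁻ s in univ.pi fun _ => Icc 0 1, ∏ i : Fin N, ENNReal.ofReal (1 / √(1 - s i)) := by
        rw [lintegral_pi_prod_ofReal (fun _ => by positivity) integrableOn_one_div_sqrt_one_sub,
          integral_one_div_sqrt_one_sub]
    _ ≤ N ! * ∫⁻ s in simplexSet N 1, ∏ i : Fin N, ENNReal.ofReal (1 / √(1 - s i)) :=
        lintegral_pi_Icc_le_factorial_mul _ fun σ s =>
          Equiv.prod_comp σ fun i => ENNReal.ofReal (1 / √(1 - s i))
    _ = ∫⁻ s in simplexSet N 1, N ! * ∏ i : Fin N, ENNReal.ofReal (1 / √(1 - s i)) :=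
        (lintegral_const_mul' _ _ (by simp)).symm
    _ ≤ ∫⁻ s in simplexSet N 1, ENNReal.ofReal (Jintegrand N 1 s) := by
        refine lintegral_mono_ae ?_
        filter_upwards [ae_restrict_simplexSet_gapMap_pos N 1] with s ⟨hs, hgap⟩
        rw [← ofReal_factorial_mul_prod _ fun _ => by positivity]
        exact ENNReal.ofReal_le_ofReal (factorial_mul_prod_le_Jintegrand hs hgap)

lemma lintegral_Jintegrand_le (N : ℕ) :
    ∫⁻ s in simplexSet N 1, ENNReal.ofReal (Jintegrand N 1 s) ≤ N ! * ENNReal.ofReal (2 ^ N) :=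
  calc ∫⁻ s in simplexSet N 1, ENNReal.ofReal (Jintegrand N 1 s)
      ≤ ∫⁻ s in simplexSet N 1, N ! * ∏ i, ENNReal.ofReal (1 / √(gapMap N 1 s i)) := by
        refine lintegral_mono_ae ?_
        filter_upwards [ae_restrict_simplexSet_gapMap_pos N 1] with s ⟨hs, hgap⟩
        rw [← ofReal_factorial_mul_prod _ fun _ => by positivity]
        exact ENNReal.ofReal_le_ofReal (Jintegrand_le_factorial_mul_prod hs hgap)
    _ = N ! * ∫⁻ s in simplexSet N 1, ∏ i, ENNReal.ofReal (1 / √(gapMap N 1 s i)) :=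
        lintegral_const_mul' _ _ (by simp)
    _ ≤ N ! * ∫⁻ u in univ.pi fun _ => Icc 0 1, ∏ i, ENNReal.ofReal (1 / √(u i)) :=
        mul_le_mul_right (setLIntegral_simplexSet_comp_gapMap_le
          (fun u => ∏ i, ENNReal.ofReal (1 / √(u i))) (by fun_prop)) _
    _ = N ! * ENNReal.ofReal (2 ^ N) := by
        rw [lintegral_pi_prod_ofReal (fun _ => by positivity) integrableOn_one_div_sqrt,
          integral_one_div_sqrt]

theorem Jfun_one_ge_two_pow_general (N : ℕ) :
    (2 : ℝ) ^ N ≤ Jfun N 1 := by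
  have h_finite : ∫⁻ s in simplexSet N 1, ENNReal.ofReal (Jintegrand N 1 s) ≠ ∞ :=
    ne_top_of_le_ne_top (by finiteness) (lintegral_Jintegrand_le N)
  change (2 : ℝ) ^ N ≤ ∫ s in simplexSet N 1, Jintegrand N 1 s
  rw [integral_eq_lintegral_of_nonneg_ae (ae_of_all _ (Jintegrand_nonneg N 1))
    (measurable_Jintegrand N 1).aestronglyMeasurable, ← ENNReal.ofReal_le_iff_le_toReal h_finite]
  exact ofReal_two_pow_le_lintegral_Jintegrand N

/-- the lower bound `J_N ≥ 2^N`, where `J_N := J_N(1)`. -/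
theorem Jfun_one_ge_two_pow (N : ℕ) (hN : 1 ≤ N) :
    (2 : ℝ) ^ N ≤ Jfun N 1 :=
  Jfun_one_ge_two_pow_general N
end

section
/- Define K_0 = 1 and recursively K_N = ∑_{k=1}^N (1/k!) ∑_{n_2+⋯+n_{k+1}=N, n_j≥1} ∏_{j=2}^{k+1} (K_{n_j−1}·√π). Then K_N = (N+1)^N π^{N/2} / (N+1)! for all N ≥ 0. -/
/-!
Write `K N = t (N + 1) * π ^ (N / 2)` with `t m = m ^ (m - 1) / m!`. The recursion then says that
`∑ t (N + 1) x ^ N` is `exp T` for the tree series `T = ∑ t m x ^ m`, i.e. `T = x exp T`.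
The coefficients `E N` of `exp T` are determined by `N E N = ∑ m t m E (N - m)`, the coefficient
form of `x (exp T)' = x T' exp T`, and `t (N + 1)` satisfies the same recursion by Abel's identity
`∑ (x + j) ^ j / j! * y (y + n - j) ^ (n - j - 1) / (n - j)! = (x + y + n) ^ n / n!` at `x = y = 1`.
Abel's identity holds because, as polynomials in `y`, both sides have the same derivative
(by induction on `n`) and agree at `y = 0`.
-/

open Finset Polynomial Real
open scoped Nat

/-- The set of ordered compositions of `N` into `k` positive parts (each part is at most `N`,
so it is encoded as a function `Fin k → Fin (N+1)`). -/
def compositionsFinset (N k : ℕ) : Finset (Fin k → Fin (N + 1)) :=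
  Finset.univ.filter fun c => (∀ j, 1 ≤ (c j : ℕ)) ∧ (∑ j, (c j : ℕ)) = N

section Sheffer

variable {R : Type*} [CommRing R] [IsAddTorsionFree R]

theorem Polynomial.eq_of_derivative_eq_of_eval_zero_eq {p q : R[X]}
    (hd : derivative p = derivative q) (h0 : p.eval 0 = q.eval 0) : p = q := by
  have h := eq_C_of_derivative_eq_zero (p := p - q) (by rw [derivative_sub, hd, sub_self])
  rwa [coeff_zero_eq_eval_zero, eval_sub, h0, sub_self, C_0, sub_eq_zero] at h

-- The Sheffer identity for the delta operator `p ↦ (derivative p).comp (X - 1)`, whose basic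
-- sequence is `a`.
theorem comp_X_add_C_eq_sum_C_eval_mul (a s : ℕ → R[X]) (ha₀ : a 0 = 1)
    (ha : ∀ n, (a (n + 1)).eval 0 = 0) (hda : ∀ n, derivative (a (n + 1)) = (a n).comp (X + 1))
    (hds₀ : derivative (s 0) = 0) (hds : ∀ n, derivative (s (n + 1)) = (s n).comp (X + 1))
    (x : R) (n : ℕ) :
    (s n).comp (X + C x) = ∑ j ∈ range (n + 1), C ((s j).eval x) * a (n - j) := by
  induction n with
  | zero =>
    obtain ⟨c, hc⟩ : ∃ c, s 0 = C c := ⟨_, eq_C_of_derivative_eq_zero hds₀⟩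
    simp [hc, ha₀]
  | succ n ih =>
    apply eq_of_derivative_eq_of_eval_zero_eq
    · have hshift := congrArg (fun p => p.comp (X + 1)) ih
      simp only [comp_assoc, add_comp, X_comp, C_comp, Polynomial.sum_comp, mul_comp] at hshift
      rw [sum_range_succ, Nat.sub_self, ha₀, derivative_add, derivative_mul, derivative_C,
        derivative_one, derivative_comp, hds, comp_assoc, derivative_sum]
      simp only [derivative_mul, derivative_C, zero_mul, mul_zero, zero_add, add_zero,
        derivative_add, derivative_X, one_mul, add_comp, X_comp, one_comp]
      rw [add_right_comm, hshift]
      refine sum_congr rfl fun j hj => ?_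
      rw [Nat.sub_add_comm (mem_range_succ_iff.mp hj), hda]
    · rw [eval_comp, eval_finsetSum, sum_range_succ, sum_eq_zero fun j hj => ?_]
      · simp [ha₀]
      · rw [Nat.sub_add_comm (mem_range_succ_iff.mp hj), eval_mul, ha, mul_zero]

end Sheffer

section Abel

variable {K : Type*} [Field K]

noncomputable def abelPoly : ℕ → K[X]
  | 0 => 1
  | n + 1 => C ((n + 1)! : K)⁻¹ * X * (X + C ((n : K) + 1)) ^ n

theorem eval_zero_abelPoly_succ (n : ℕ) : (abelPoly (n + 1) : K[X]).eval 0 = 0 := by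
  simp [abelPoly]

theorem inv_factorial_eq_inv_factorial_succ_mul [CharZero K] (n : ℕ) :
    (n ! : K)⁻¹ = ((n + 1)! : K)⁻¹ * (n + 1) := by
  rw [Nat.factorial_succ, Nat.cast_mul, mul_inv, mul_right_comm, Nat.cast_add_one,
    inv_mul_cancel₀ (Nat.cast_add_one_ne_zero n), one_mul]

theorem derivative_abelPoly_succ [CharZero K] (n : ℕ) :
    derivative (abelPoly (n + 1) : K[X]) = (abelPoly n).comp (X + 1) := by
  cases n with
  | zero => simp [abelPoly]
  | succ n =>
    simp only [abelPoly, derivative_mul, derivative_C, derivative_X, derivative_pow,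
      derivative_add, mul_comp, C_comp, X_comp, pow_comp, add_comp,
      inv_factorial_eq_inv_factorial_succ_mul (n + 1), C_mul]
    simp only [map_add, map_natCast, map_one]
    push_cast
    ring

theorem abel_identity [CharZero K] (x y : K) (n : ℕ) :
    (x + y + n) ^ n / n ! = ∑ j ∈ range (n + 1), (x + j) ^ j / j ! * (abelPoly (n - j)).eval y := by
  set s : ℕ → K[X] := fun n => C (n ! : K)⁻¹ * (X + C (n : K)) ^ n
  have hds (n : ℕ) : derivative (s (n + 1)) = (s n).comp (X + 1) := by
    simp only [s, derivative_mul, derivative_C, derivative_X, derivative_pow, derivative_add,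
      mul_comp, C_comp, X_comp, pow_comp, add_comp, inv_factorial_eq_inv_factorial_succ_mul n,
      C_mul]
    simp only [map_add, map_natCast, map_one]
    push_cast
    ring
  have h := congrArg (eval y) (comp_X_add_C_eq_sum_C_eval_mul abelPoly s rfl eval_zero_abelPoly_succ
    derivative_abelPoly_succ (by simp [s]) hds x n)
  simp only [s, eval_comp, eval_mul, eval_C, eval_pow, eval_add, eval_X, eval_finsetSum] at h
  rw [div_eq_inv_mul, show x + y + n = y + x + n by ring, h]
  exact sum_congr rfl fun j _ => by ring

end Abel

section Compositions

variable {M : Type*} [AddCommMonoid M]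

@[simp]
theorem mem_compositionsFinset {N k : ℕ} {c : Fin k → Fin (N + 1)} :
    c ∈ compositionsFinset N k ↔ (∀ j, 1 ≤ (c j : ℕ)) ∧ ∑ j, (c j : ℕ) = N := by
  simp [compositionsFinset]

theorem compositionsFinset_eq_empty {N k : ℕ} (h : N < k) : compositionsFinset N k = ∅ := by
  refine eq_empty_of_forall_notMem fun c hc => ?_
  rw [mem_compositionsFinset] at hc
  have : k ≤ ∑ j, (c j : ℕ) := by
    simpa using sum_le_sum fun j (_ : j ∈ univ) => hc.1 j
  omega

theorem compositionsFinset_zero_right {N : ℕ} (hN : N ≠ 0) : compositionsFinset N 0 = ∅ := by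
  refine eq_empty_of_forall_notMem fun c hc => ?_
  simp only [mem_compositionsFinset, univ_eq_empty, sum_empty] at hc
  exact hN hc.2.symm

theorem sum_compositionsFinset_comp_perm {N k : ℕ} (σ : Equiv.Perm (Fin k))
    (F : (Fin k → Fin (N + 1)) → M) :
    ∑ c ∈ compositionsFinset N k, F (c ∘ σ) = ∑ c ∈ compositionsFinset N k, F c := by
  have hmem (τ : Equiv.Perm (Fin k)) {c} (hc : c ∈ compositionsFinset N k) :
      c ∘ τ ∈ compositionsFinset N k := by
    rw [mem_compositionsFinset] at hc ⊢
    exact ⟨fun j => hc.1 (τ j), (Equiv.sum_comp τ fun j => (c j : ℕ)).trans hc.2⟩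
  exact sum_nbij' (· ∘ σ) (· ∘ σ.symm) (fun c hc => hmem σ hc) (fun c hc => hmem σ.symm hc)
    (fun c _ => by ext; simp) (fun c _ => by ext; simp) fun _ _ => rfl

theorem sum_compositionsFinset_succ_filter_head_eq {N k m : ℕ} (hm : m ∈ Icc 1 N)
    (F : ℕ → (Fin k → ℕ) → M) :
    ∑ c ∈ compositionsFinset N (k + 1) with (c 0 : ℕ) = m, F (c 0) (fun j => c j.succ) =
      ∑ d ∈ compositionsFinset (N - m) k, F m (fun j => d j) := by
  rw [mem_Icc] at hm
  have hfiber {c : Fin (k + 1) → Fin (N + 1)}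
      (hc : c ∈ {c ∈ compositionsFinset N (k + 1) | (c 0 : ℕ) = m}) :
      (∀ j, 1 ≤ (c j : ℕ)) ∧ (c 0 : ℕ) = m ∧ ∑ j : Fin k, (c j.succ : ℕ) = N - m := by
    rw [mem_filter, mem_compositionsFinset, Fin.sum_univ_succ] at hc
    exact ⟨hc.1.1, hc.2, by omega⟩
  have hval {n a : ℕ} (h : a ≤ n) : (Fin.ofNat (n + 1) a : ℕ) = a := Nat.mod_eq_of_lt (by omega)
  have htail {c} (hc : c ∈ {c ∈ compositionsFinset N (k + 1) | (c 0 : ℕ) = m}) (j : Fin k) :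
      (Fin.ofNat (N - m + 1) (c j.succ) : ℕ) = c j.succ := by
    obtain ⟨-, -, hs⟩ := hfiber hc
    exact hval (hs ▸ single_le_sum (f := fun i : Fin k => (c i.succ : ℕ))
      (fun i _ => Nat.zero_le _) (mem_univ j))
  refine sum_nbij' (fun c j => Fin.ofNat _ (c j.succ))
    (fun d => Fin.cons (Fin.ofNat _ m) fun j => Fin.castLE (by omega) (d j))
    (fun c hc => ?_) (fun d hd => ?_) (fun c hc => ?_) (fun d _ => ?_) (fun c hc => ?_)
  · obtain ⟨h1, -, hs⟩ := hfiber hc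
    simp only [mem_compositionsFinset, htail hc]
    exact ⟨fun j => h1 j.succ, hs⟩
  · rw [mem_compositionsFinset] at hd
    simp only [mem_filter, mem_compositionsFinset, Fin.sum_univ_succ, Fin.forall_fin_succ,
      Fin.cons_zero, Fin.cons_succ, Fin.val_castLE, hval hm.2]
    exact ⟨⟨⟨hm.1, hd.1⟩, by omega⟩, trivial⟩
  · obtain ⟨-, h0, -⟩ := hfiber hc
    refine funext fun j => Fin.cases ?_ (fun i => ?_) j
    · exact Fin.ext (by simp only [Fin.cons_zero, hval hm.2, h0])
    · exact Fin.ext (by simp only [Fin.cons_succ, Fin.val_castLE, htail hc])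
  · exact funext fun j => Fin.ext (by simp only [Fin.cons_succ, Fin.val_castLE, hval (Fin.is_le _)])
  · obtain ⟨-, h0, -⟩ := hfiber hc
    simp only [h0, htail hc]

theorem sum_compositionsFinset_succ (N k : ℕ) (F : ℕ → (Fin k → ℕ) → M) :
    ∑ c ∈ compositionsFinset N (k + 1), F (c 0) (fun j => c j.succ) =
      ∑ m ∈ Icc 1 N, ∑ d ∈ compositionsFinset (N - m) k, F m (fun j => d j) := by
  have hhead : ∀ c ∈ compositionsFinset N (k + 1), (c 0 : ℕ) ∈ Icc 1 N := by
    intro c hc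
    rw [mem_compositionsFinset, Fin.sum_univ_succ] at hc
    exact mem_Icc.mpr ⟨hc.1 0, by omega⟩
  rw [← sum_fiberwise_of_maps_to hhead]
  exact sum_congr rfl fun m hm => sum_compositionsFinset_succ_filter_head_eq hm F

variable {R : Type*} [CommSemiring R]

def compositionSum (g : ℕ → R) (N k : ℕ) : R :=
  ∑ c ∈ compositionsFinset N k, ∏ j, g (c j)

theorem compositionSum_zero_zero (g : ℕ → R) : compositionSum g 0 0 = 1 := by
  have : compositionsFinset 0 0 = univ := eq_univ_of_forall fun c => by simp
  simp [compositionSum, this]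

theorem compositionSum_zero_right (g : ℕ → R) {N : ℕ} (hN : N ≠ 0) : compositionSum g N 0 = 0 := by
  simp [compositionSum, compositionsFinset_zero_right hN]

theorem compositionSum_of_lt (g : ℕ → R) {N k : ℕ} (h : N < k) : compositionSum g N k = 0 := by
  simp [compositionSum, compositionsFinset_eq_empty h]

theorem compositionSum_mul_pow (g : ℕ → R) (r : R) (N k : ℕ) :
    compositionSum (fun m => g m * r ^ m) N k = r ^ N * compositionSum g N k := by
  rw [compositionSum, compositionSum, mul_sum]
  refine sum_congr rfl fun c hc => ?_
  rw [prod_mul_distrib, prod_pow_eq_pow_sum, (mem_compositionsFinset.mp hc).2, mul_comm]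

theorem natCast_mul_compositionSum_succ (g : ℕ → R) (N k : ℕ) :
    (N : R) * compositionSum g N (k + 1) =
      (k + 1) * ∑ m ∈ Icc 1 N, m * g m * compositionSum g (N - m) k := by
  have hsymm (i : Fin (k + 1)) : ∑ c ∈ compositionsFinset N (k + 1), (c i : R) * ∏ j, g (c j) =
      ∑ c ∈ compositionsFinset N (k + 1), (c 0 : R) * ∏ j, g (c j) := by
    rw [← sum_compositionsFinset_comp_perm (Equiv.swap 0 i)]
    refine sum_congr rfl fun c _ => ?_
    simp only [Function.comp_apply, Equiv.swap_apply_right]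
    rw [Equiv.prod_comp (Equiv.swap 0 i) fun j => g (c j)]
  -- `N` is the sum of the parts, and by symmetry every part contributes as much as the first.
  calc (N : R) * compositionSum g N (k + 1)
      = ∑ i, ∑ c ∈ compositionsFinset N (k + 1), (c i : R) * ∏ j, g (c j) := by
        rw [sum_comm, compositionSum, mul_sum]
        refine sum_congr rfl fun c hc => ?_
        rw [← sum_mul, ← Nat.cast_sum, (mem_compositionsFinset.mp hc).2]
    _ = (k + 1) * ∑ c ∈ compositionsFinset N (k + 1), (c 0 : R) * ∏ j, g (c j) := by
        simp [hsymm]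
    _ = (k + 1) * ∑ m ∈ Icc 1 N, m * g m * compositionSum g (N - m) k := by
        simp only [Fin.prod_univ_succ, ← mul_assoc]
        rw [sum_compositionsFinset_succ N k fun m x => (m : R) * g m * ∏ j, g (x j)]
        simp [compositionSum, mul_sum]

end Compositions

section ExpComposition

variable {K : Type*} [Field K]

-- The coefficient of `x ^ N` in `exp (∑_{m ≥ 1} g m x ^ m)`.
noncomputable def expCompositionSum (g : ℕ → K) (N : ℕ) : K :=
  ∑ k ∈ range (N + 1), (k ! : K)⁻¹ * compositionSum g N k

theorem expCompositionSum_zero (g : ℕ → K) : expCompositionSum g 0 = 1 := by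
  simp [expCompositionSum, compositionSum_zero_zero]

theorem expCompositionSum_eq_sum_Icc (g : ℕ → K) {N : ℕ} (hN : N ≠ 0) :
    expCompositionSum g N = ∑ k ∈ Icc 1 N, (k ! : K)⁻¹ * compositionSum g N k := by
  rw [expCompositionSum, range_eq_Ico, sum_eq_sum_Ico_succ_bot N.succ_pos,
    compositionSum_zero_right g hN, mul_zero, zero_add]
  rfl

theorem natCast_mul_expCompositionSum [CharZero K] (g : ℕ → K) (N : ℕ) :
    (N : K) * expCompositionSum g N = ∑ m ∈ Icc 1 N, m * g m * expCompositionSum g (N - m) := by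
  have hk (k : ℕ) : (N : K) * (((k + 1)! : K)⁻¹ * compositionSum g N (k + 1)) =
      ∑ m ∈ Icc 1 N, m * g m * ((k ! : K)⁻¹ * compositionSum g (N - m) k) := by
    rw [mul_left_comm, natCast_mul_compositionSum_succ, ← mul_assoc,
      ← inv_factorial_eq_inv_factorial_succ_mul, mul_sum]
    exact sum_congr rfl fun m _ => by ring
  have hsub {m : ℕ} (hm : m ∈ Icc 1 N) :
      ∑ k ∈ range N, (k ! : K)⁻¹ * compositionSum g (N - m) k = expCompositionSum g (N - m) := by
    rw [mem_Icc] at hm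
    refine (sum_subset (range_subset_range.mpr (by omega)) fun k hk hk' => ?_).symm
    rw [mem_range] at hk hk'
    rw [compositionSum_of_lt g (by omega), mul_zero]
  have h0 : (N : K) * compositionSum g N 0 = 0 := by
    rcases eq_or_ne N 0 with rfl | hN
    · rw [Nat.cast_zero, zero_mul]
    · rw [compositionSum_zero_right g hN, mul_zero]
  rw [expCompositionSum, mul_sum, sum_range_succ']
  simp only [hk, Nat.factorial_zero, Nat.cast_one, inv_one, one_mul, h0, add_zero]
  rw [sum_comm]
  refine sum_congr rfl fun m hm => ?_
  rw [← hsub hm, mul_sum]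

theorem expCompositionSum_eq_of_natCast_mul [CharZero K] (g f : ℕ → K) (hf₀ : f 0 = 1)
    (hf : ∀ N : ℕ, (N : K) * f N = ∑ m ∈ Icc 1 N, m * g m * f (N - m)) (N : ℕ) :
    expCompositionSum g N = f N := by
  induction N using Nat.strong_induction_on with
  | _ N ih =>
    rcases eq_or_ne N 0 with rfl | hN
    · rw [expCompositionSum_zero, hf₀]
    refine mul_left_cancel₀ (Nat.cast_ne_zero.mpr hN) ?_
    rw [natCast_mul_expCompositionSum, hf]
    refine sum_congr rfl fun m hm => ?_
    rw [ih _ (by rw [mem_Icc] at hm; omega)]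

end ExpComposition

section Trees

variable {K : Type*} [Field K] [CharZero K]

noncomputable def treeCoeff (m : ℕ) : K := m ^ (m - 1) / m !

theorem eval_one_abelPoly (n : ℕ) : (abelPoly n : K[X]).eval 1 = treeCoeff (n + 1) := by
  cases n with
  | zero => simp [abelPoly, treeCoeff]
  | succ n =>
    simp only [abelPoly, treeCoeff, eval_mul, eval_C, eval_X, eval_pow, eval_add,
      Nat.add_sub_cancel, inv_factorial_eq_inv_factorial_succ_mul (n + 1)]
    push_cast
    ring

theorem succ_mul_treeCoeff_succ (j : ℕ) :
    ((j : K) + 1) * treeCoeff (j + 1) = (1 + j) ^ j / j ! := by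
  rw [treeCoeff, Nat.add_sub_cancel, div_eq_mul_inv, div_eq_mul_inv,
    inv_factorial_eq_inv_factorial_succ_mul j]
  push_cast
  ring

theorem natCast_mul_treeCoeff_succ (N : ℕ) :
    (N : K) * treeCoeff (N + 1) = ∑ m ∈ Icc 1 N, (m : K) * treeCoeff m * treeCoeff (N - m + 1) := by
  cases N with
  | zero => simp
  | succ n =>
    have hlhs : ((n + 1 : ℕ) : K) * treeCoeff (n + 1 + 1) = (1 + 1 + n) ^ n / n ! := by
      rw [treeCoeff, div_eq_mul_inv, div_eq_mul_inv, inv_factorial_eq_inv_factorial_succ_mul n,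
        inv_factorial_eq_inv_factorial_succ_mul (n + 1)]
      push_cast
      ring
    rw [hlhs, abel_identity, ← Ico_add_one_right_eq_Icc, sum_Ico_eq_sum_range,
      Nat.add_sub_cancel]
    refine sum_congr rfl fun j hj => ?_
    rw [← succ_mul_treeCoeff_succ, eval_one_abelPoly, add_comm 1 j,
      show n + 1 - (j + 1) = n - j by omega]
    push_cast
    rfl

theorem expCompositionSum_treeCoeff (N : ℕ) :
    expCompositionSum (treeCoeff : ℕ → K) N = treeCoeff (N + 1) :=
  expCompositionSum_eq_of_natCast_mul _ _ (by simp [treeCoeff]) natCast_mul_treeCoeff_succ N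

end Trees

/-- if `K 0 = 1` and
`K N = ∑_{k=1}^N (1/k!) ∑_{n_2+⋯+n_{k+1}=N, n_j ≥ 1} ∏_{j=2}^{k+1} (K (n_j - 1) · √π)`
for all `N ≥ 1`, then `K N = (N+1)^N π^{N/2} / (N+1)!` for all `N`. -/
theorem K_closed_form (K : ℕ → ℝ) (hK0 : K 0 = 1)
    (hKrec : ∀ N : ℕ, 1 ≤ N →
      K N = ∑ k ∈ Finset.Icc 1 N, ((k.factorial : ℝ))⁻¹ *
        ∑ c ∈ compositionsFinset N k, ∏ j : Fin k, (K ((c j : ℕ) - 1) * Real.sqrt Real.pi)) :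
    ∀ N : ℕ, K N = ((N : ℝ) + 1) ^ N * Real.pi ^ ((N : ℝ) / 2) / ((N + 1).factorial : ℝ) := by
  suffices h : ∀ N, K N = treeCoeff (N + 1) * √π ^ N by
    intro N
    rw [h, treeCoeff, Real.rpow_div_two_eq_sqrt _ Real.pi_pos.le, Real.rpow_natCast,
      Nat.add_sub_cancel]
    push_cast
    ring
  intro N
  induction N using Nat.strong_induction_on with
  | _ N ih =>
    rcases eq_or_ne N 0 with rfl | hN
    · simp [hK0, treeCoeff]
    have hfactor {k : ℕ} {c : Fin k → Fin (N + 1)} (hc : c ∈ compositionsFinset N k) (j : Fin k) :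
        K (c j - 1) * √π = treeCoeff (c j) * √π ^ (c j : ℕ) := by
      have h1 := (mem_compositionsFinset.mp hc).1 j
      rw [ih _ (by omega), Nat.sub_add_cancel h1, mul_assoc, ← pow_succ, Nat.sub_add_cancel h1]
    calc K N
        = ∑ k ∈ Icc 1 N, (k ! : ℝ)⁻¹ * compositionSum (fun m => treeCoeff m * √π ^ m) N k := by
          rw [hKrec N (Nat.one_le_iff_ne_zero.mpr hN)]
          exact sum_congr rfl fun k _ => congrArg _ (sum_congr rfl fun c hc =>
            prod_congr rfl fun j _ => hfactor hc j)
      _ = treeCoeff (N + 1) * √π ^ N := by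
          simp only [compositionSum_mul_pow, mul_left_comm _ (√π ^ N)]
          rw [← mul_sum, ← expCompositionSum_eq_sum_Icc _ hN, expCompositionSum_treeCoeff, mul_comm]
end

section
/- Let ψ : [0,T] → [0,∞) be a bounded measurable function satisfying ψ(t) ≤ ∫_0^t ψ(r)(A/√(t−r) + B) dr for all t ∈ [0,T], where A, B ≥ 0. Then ψ ≡ 0 on [0,T]. -/
/-! Once `ψ` is known to vanish on `[0, a]`, the inequality at a time `t ∈ [a, a + δ]` only
integrates `ψ` over `[a, t]`, against kernel mass `∫₀^{t-a} k ≤ ∫₀^δ k`. Choosing `δ` with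
`∫₀^δ k ≤ 1/2`, possible because `A/√u + B` is integrable at `0`, the bound `M` of `ψ` on
`[0, a + δ]` improves to `M/2`, hence to `M/2ⁿ`, so `ψ = 0` there. Steps of length `δ`
then exhaust `[0, T]`. -/

open MeasureTheory intervalIntegral
open Set Filter Topology

theorem eq_zero_of_forall_le_mul_of_lt_one {α : Type*} {S : Set α} {f : α → ℝ} {c M : ℝ}
    (hc0 : 0 ≤ c) (hc1 : c < 1) (hf0 : ∀ x ∈ S, 0 ≤ f x) (hM : ∀ x ∈ S, f x ≤ M)
    (h : ∀ K, 0 ≤ K → (∀ x ∈ S, f x ≤ K) → ∀ x ∈ S, f x ≤ c * K) :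
    ∀ x ∈ S, f x = 0 := by
  intro x hx
  have hM0 : 0 ≤ M := (hf0 x hx).trans (hM x hx)
  have hpow (n : ℕ) : ∀ y ∈ S, f y ≤ c ^ n * M := by
    induction n with
    | zero => simpa using hM
    | succ n ih => simpa [pow_succ, mul_assoc, mul_left_comm c] using h _ (by positivity) ih
  have hlim : Tendsto (fun n : ℕ => c ^ n * M) atTop (𝓝 0) := by
    simpa using (tendsto_pow_atTop_nhds_zero_of_lt_one hc0 hc1).mul_const M
  exact le_antisymm (ge_of_tendsto' hlim fun n => hpow n x hx) (hf0 x hx)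

section ConvolutionKernel

variable {T : ℝ} {k ψ : ℝ → ℝ}

theorem intervalIntegrable_comp_sub {p q t : ℝ} (hk : IntervalIntegrable k volume 0 T)
    (hp : 0 ≤ p) (hpq : p ≤ q) (hqt : q ≤ t) (htT : t ≤ T) :
    IntervalIntegrable (fun r => k (t - r)) volume p q := by
  refine (hk.comp_sub_left t).mono_set ?_
  rw [uIcc_of_le hpq, sub_zero, uIcc_of_ge (by linarith)]
  exact Icc_subset_Icc (by linarith) hqt

theorem intervalIntegrable_mul_comp_sub {M p q t : ℝ} (hk : IntervalIntegrable k volume 0 T)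
    (hψ : AEStronglyMeasurable ψ) (hM : ∀ r ∈ Icc 0 T, ‖ψ r‖ ≤ M)
    (hp : 0 ≤ p) (hpq : p ≤ q) (hqt : q ≤ t) (htT : t ≤ T) :
    IntervalIntegrable (fun r => ψ r * k (t - r)) volume p q := by
  have hk' := intervalIntegrable_comp_sub hk hp hpq hqt htT
  rw [intervalIntegrable_iff_integrableOn_Ioc_of_le hpq] at hk' ⊢
  refine hk'.bdd_mul (c := M) hψ.restrict ?_
  filter_upwards [ae_restrict_mem measurableSet_Ioc] with r hr
  exact hM r ⟨hp.trans hr.1.le, hr.2.trans (hqt.trans htT)⟩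

theorem exists_pos_forall_integral_le (hk : IntervalIntegrable k volume 0 T) {ε : ℝ}
    (hε : 0 < ε) : ∃ δ > 0, ∀ s ∈ Icc 0 T, s ≤ δ → ∫ u in (0 : ℝ)..s, k u ≤ ε := by
  have hcont := continuousOn_primitive_interval' hk left_mem_uIcc 0 left_mem_uIcc
  obtain ⟨δ, hδ, hsmall⟩ := Metric.continuousWithinAt_iff.mp hcont ε hε
  refine ⟨δ / 2, half_pos hδ, fun s hs hsδ => ?_⟩
  have hsT : s ∈ uIcc 0 T := Icc_subset_uIcc hs
  have := hsmall hsT (by rw [Real.dist_eq, sub_zero, abs_of_nonneg hs.1]; linarith)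
  rw [integral_same, Real.dist_eq, sub_zero] at this
  exact (le_abs_self _).trans this.le

theorem le_mul_of_eq_zero_of_le_add {M a δ c K : ℝ} (hk0 : ∀ u ∈ Icc 0 T, 0 ≤ k u)
    (hk : IntervalIntegrable k volume 0 T) (hψ : AEStronglyMeasurable ψ)
    (hM : ∀ r ∈ Icc 0 T, ‖ψ r‖ ≤ M)
    (hineq : ∀ t ∈ Icc 0 T, ψ t ≤ ∫ r in (0 : ℝ)..t, ψ r * k (t - r))
    (ha : 0 ≤ a) (hc : 0 ≤ c) (hK : 0 ≤ K)
    (hδ : ∀ s ∈ Icc 0 T, s ≤ δ → ∫ u in (0 : ℝ)..s, k u ≤ c)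
    (hzero : ∀ r ∈ Icc 0 T, r ≤ a → ψ r = 0)
    (hle : ∀ r ∈ Icc 0 T, r ≤ a + δ → ψ r ≤ K) :
    ∀ t ∈ Icc 0 T, t ≤ a + δ → ψ t ≤ c * K := by
  intro t ht htδ
  rcases le_or_gt t a with hta | hat
  · rw [hzero t ht hta]; positivity
  have hint (p q : ℝ) (hp : 0 ≤ p) (hpq : p ≤ q) (hqt : q ≤ t) :=
    intervalIntegrable_mul_comp_sub hk hψ hM (t := t) hp hpq hqt ht.2
  have hvanish : ∫ r in (0 : ℝ)..a, ψ r * k (t - r) = 0 := by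
    refine (integral_congr fun r hr => ?_).trans integral_zero
    rw [uIcc_of_le ha] at hr
    simp [hzero r ⟨hr.1, hr.2.trans (hat.le.trans ht.2)⟩ hr.2]
  have hkernel : ∫ r in a..t, k (t - r) = ∫ u in (0 : ℝ)..(t - a), k u := by
    rw [integral_comp_sub_left, sub_self]
  calc ψ t ≤ ∫ r in (0 : ℝ)..t, ψ r * k (t - r) := hineq t ht
    _ = ∫ r in a..t, ψ r * k (t - r) := by
      rw [← integral_add_adjacent_intervals (hint 0 a le_rfl ha hat.le)
        (hint a t ha hat.le le_rfl), hvanish, zero_add]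
    _ ≤ ∫ r in a..t, K * k (t - r) := by
      refine integral_mono_on hat.le (hint a t ha hat.le le_rfl) ?_ fun r hr => ?_
      · exact (intervalIntegrable_comp_sub hk ha hat.le le_rfl ht.2).const_mul K
      · exact mul_le_mul_of_nonneg_right
          (hle r ⟨ha.trans hr.1, hr.2.trans ht.2⟩ (hr.2.trans htδ))
          (hk0 _ ⟨by linarith [hr.2], by linarith [hr.1, ht.2]⟩)
    _ = K * ∫ u in (0 : ℝ)..(t - a), k u := by rw [intervalIntegral.integral_const_mul, hkernel]
    _ ≤ K * c := by
      gcongr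
      exact hδ (t - a) ⟨by linarith, by linarith [ht.2]⟩ (by linarith)
    _ = c * K := mul_comm K c

theorem eq_zero_of_le_add_of_eq_zero {M a δ c : ℝ} (hk0 : ∀ u ∈ Icc 0 T, 0 ≤ k u)
    (hk : IntervalIntegrable k volume 0 T) (hψ : AEStronglyMeasurable ψ)
    (hψ0 : ∀ t ∈ Icc 0 T, 0 ≤ ψ t) (hM : ∀ t ∈ Icc 0 T, ψ t ≤ M)
    (hineq : ∀ t ∈ Icc 0 T, ψ t ≤ ∫ r in (0 : ℝ)..t, ψ r * k (t - r))
    (ha : 0 ≤ a) (hc0 : 0 ≤ c) (hc1 : c < 1)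
    (hδ : ∀ s ∈ Icc 0 T, s ≤ δ → ∫ u in (0 : ℝ)..s, k u ≤ c)
    (hzero : ∀ r ∈ Icc 0 T, r ≤ a → ψ r = 0) :
    ∀ t ∈ Icc 0 T, t ≤ a + δ → ψ t = 0 := by
  have hnorm : ∀ r ∈ Icc 0 T, ‖ψ r‖ ≤ M := fun r hr => by
    rw [Real.norm_of_nonneg (hψ0 r hr)]; exact hM r hr
  have := eq_zero_of_forall_le_mul_of_lt_one (S := {t | t ∈ Icc 0 T ∧ t ≤ a + δ}) hc0 hc1
    (fun t ht => hψ0 t ht.1) (fun t ht => hM t ht.1) fun K hK hle t ht =>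
      le_mul_of_eq_zero_of_le_add hk0 hk hψ hnorm hineq ha hc0 hK hδ hzero
        (fun r hr hrδ => hle r ⟨hr, hrδ⟩) t ht.1 ht.2
  exact fun t ht htδ => this t ⟨ht, htδ⟩

theorem eq_zero_of_le_integral_mul_comp_sub (hk0 : ∀ u ∈ Icc 0 T, 0 ≤ k u)
    (hk : IntervalIntegrable k volume 0 T) (hψ : AEStronglyMeasurable ψ)
    (hψ0 : ∀ t ∈ Icc 0 T, 0 ≤ ψ t) (hbdd : ∃ M, ∀ t ∈ Icc 0 T, ψ t ≤ M)
    (hineq : ∀ t ∈ Icc 0 T, ψ t ≤ ∫ r in (0 : ℝ)..t, ψ r * k (t - r)) :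
    ∀ t ∈ Icc 0 T, ψ t = 0 := by
  obtain ⟨M, hM⟩ := hbdd
  obtain ⟨δ, hδ0, hδ⟩ := exists_pos_forall_integral_le hk one_half_pos
  have hzero (n : ℕ) : ∀ t ∈ Icc 0 T, t ≤ n * δ → ψ t = 0 := by
    induction n with
    | zero =>
      intro t ht htn
      obtain rfl : t = 0 := le_antisymm (by simpa using htn) ht.1
      exact le_antisymm (by simpa using hineq 0 ht) (hψ0 0 ht)
    | succ n ih =>
      intro t ht htn
      refine eq_zero_of_le_add_of_eq_zero hk0 hk hψ hψ0 hM hineq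
        (by positivity) (by norm_num) one_half_lt_one hδ ih t ht ?_
      push_cast at htn; linarith
  intro t ht
  obtain ⟨n, hn⟩ := exists_nat_ge (t / δ)
  exact hzero n t ht ((div_le_iff₀ hδ0).mp hn)

end ConvolutionKernel

theorem intervalIntegrable_div_sqrt_add_const {T : ℝ} (hT : 0 ≤ T) (A B : ℝ) :
    IntervalIntegrable (fun u => A / Real.sqrt u + B) volume 0 T := by
  refine IntervalIntegrable.add ?_ intervalIntegrable_const
  refine ((intervalIntegrable_rpow' (r := -(1 / 2)) (by norm_num)).const_mul A).congr ?_
  intro u hu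
  rw [uIoc_of_le hT] at hu
  simp only [Real.sqrt_eq_rpow, Real.rpow_neg hu.1.le, div_eq_mul_inv]

/-- a Gronwall-type lemma with singular kernel. If `ψ : [0,T] → [0,∞)` is
bounded and measurable and satisfies
`ψ(t) ≤ ∫_0^t ψ(r) (A/√(t-r) + B) dr` for all `t ∈ [0,T]` with `A, B ≥ 0`,
then `ψ ≡ 0` on `[0,T]`. -/
theorem gronwall_singular (T A B : ℝ) (hT : 0 < T) (hA : 0 ≤ A) (hB : 0 ≤ B)
    (ψ : ℝ → ℝ) (hmeas : Measurable ψ)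
    (hnonneg : ∀ t ∈ Set.Icc 0 T, 0 ≤ ψ t)
    (hbdd : ∃ M : ℝ, ∀ t ∈ Set.Icc 0 T, ψ t ≤ M)
    (hineq : ∀ t ∈ Set.Icc 0 T,
      ψ t ≤ ∫ r in (0 : ℝ)..t, ψ r * (A / Real.sqrt (t - r) + B)) :
    ∀ t ∈ Set.Icc 0 T, ψ t = 0 :=
  eq_zero_of_le_integral_mul_comp_sub (k := fun u => A / Real.sqrt u + B)
    (fun _ _ => by positivity) (intervalIntegrable_div_sqrt_add_const hT.le A B)
    hmeas.aestronglyMeasurable hnonneg hbdd hineq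
end

section
/- Let I ⊂ ℝ^d be a compact set such that #(I_ε ∩ B(x,s)) ≤ C (s/ε ∨ 1)^{d−1} for all x, s > 0 and finite subsets I_ε ⊂ I. Suppose q : I_ε → [0,∞) satisfies q(z) ≤ C₁ (ε ∨ t^{1/2})^{-d} exp(−|z−x|/(ε ∨ t^{1/2})) for some fixed x. Then ∑_{z ∈ I_ε} q(z) ≤ C' ε^{-(d−1)} (ε ∨ t^{1/2})^{-1} with C' depending only on C, C₁ and d. -/
/-!
With `h = ε ∨ √t`, split `I_ε` into the shells `k ≤ |z - x| / h < k + 1`. The `k`-th shell lies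
in `B(x, (k + 1) h)`, so it has at most `C ((k + 1) h / ε)^(d-1)` points, each contributing at most
`C₁ h^(-d) e^(-k)`. Since `(k + 1)^(d-1) e^(-k) ≲ e^(-k/2)`, the shells add up to a geometric
series, and the total is `≲ (h / ε)^(d-1) h^(-d) = ε^(-(d-1)) h^(-1)`.
-/

open Finset Metric Real
open scoped Classical Nat

theorem add_one_pow_mul_exp_neg_le (m : ℕ) {u : ℝ} (hu : 0 ≤ u) :
    (u + 1) ^ m * exp (-u) ≤ 2 ^ m * m ! * exp (1 / 2) * exp (-(u / 2)) := by
  have hpow : ((u + 1) / 2) ^ m / m ! ≤ exp ((u + 1) / 2) :=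
    pow_div_factorial_le_exp _ (by positivity) m
  rw [div_pow, div_div, div_le_iff₀ (by positivity)] at hpow
  calc (u + 1) ^ m * exp (-u)
      ≤ exp ((u + 1) / 2) * (2 ^ m * m !) * exp (-u) := by gcongr
    _ = 2 ^ m * m ! * exp (1 / 2) * exp (-(u / 2)) := by
      have hexp : exp ((u + 1) / 2) * exp (-u) = exp (1 / 2) * exp (-(u / 2)) := by
        rw [← exp_add, ← exp_add]; ring_nf
      linear_combination (2 ^ m * m ! : ℝ) * hexp

theorem Finset.sum_comp_dist_div_le_tsum {α : Type*} [PseudoMetricSpace α] (s : Finset α)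
    (x : α) {h : ℝ} (hh : 0 < h) {g : ℝ → ℝ} (hg : AntitoneOn g (Set.Ici 0))
    (hg₀ : ∀ k : ℕ, 0 ≤ g k) {a : ℕ → ℝ} (ha : Summable a)
    (hshell : ∀ k : ℕ, #(s.filter (· ∈ ball x ((k + 1) * h))) * g k ≤ a k) :
    ∑ z ∈ s, g (dist z x / h) ≤ ∑' k, a k := by
  set shell : α → ℕ := fun z => ⌊dist z x / h⌋₊
  have hshell_sum (k : ℕ) : ∑ z ∈ s.filter (shell · = k), g (dist z x / h) ≤ a k := by
    have hsub : s.filter (shell · = k) ⊆ s.filter (· ∈ ball x ((k + 1) * h)) := by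
      refine monotone_filter_right s fun z _ hz => ?_
      rw [mem_ball, ← div_lt_iff₀ hh, ← hz]
      exact Nat.lt_floor_add_one _
    calc ∑ z ∈ s.filter (shell · = k), g (dist z x / h)
        ≤ #(s.filter (shell · = k)) • g k := by
          refine sum_le_card_nsmul _ _ _ fun z hz => hg (Set.mem_Ici.2 k.cast_nonneg) ?_ ?_
          · exact Set.mem_Ici.2 (by positivity)
          · rw [← (mem_filter.1 hz).2]; exact Nat.floor_le (by positivity)
      _ ≤ #(s.filter (· ∈ ball x ((k + 1) * h))) * g k := by
          rw [nsmul_eq_mul]; gcongr; exact hg₀ k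
      _ ≤ a k := hshell k
  have ha₀ (k : ℕ) : 0 ≤ a k := (mul_nonneg (Nat.cast_nonneg _) (hg₀ k)).trans (hshell k)
  calc ∑ z ∈ s, g (dist z x / h)
      = ∑ k ∈ s.image shell, ∑ z ∈ s.filter (shell · = k), g (dist z x / h) :=
        (sum_fiberwise_of_maps_to (fun z hz => mem_image_of_mem shell hz) _).symm
    _ ≤ ∑ k ∈ s.image shell, a k := sum_le_sum fun k _ => hshell_sum k
    _ ≤ ∑' k, a k := ha.sum_le_tsum _ fun k _ => ha₀ k

theorem sum_exp_neg_dist_div_le {α : Type*} [PseudoMetricSpace α] (s : Finset α) (x : α)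
    {C ε h : ℝ} {m : ℕ} (hC : 0 ≤ C) (hε : 0 < ε) (hεh : ε ≤ h)
    (hcard : ∀ r, ε ≤ r → (#(s.filter (· ∈ ball x r)) : ℝ) ≤ C * (r / ε) ^ m) :
    ∑ z ∈ s, exp (-(dist z x / h)) ≤
      C * (h / ε) ^ m * (2 ^ m * m ! * exp (1 / 2) * (1 - exp (-(1 / 2)))⁻¹) := by
  set ρ := exp (-(1 / 2) : ℝ)
  have hρ₁ : ρ < 1 := exp_lt_one_iff.2 (by norm_num)
  set K := 2 ^ m * m ! * exp (1 / 2)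
  have hh : 0 < h := hε.trans_le hεh
  have hshell (k : ℕ) : #(s.filter (· ∈ ball x ((k + 1) * h))) * exp (-(k : ℝ)) ≤
      C * (h / ε) ^ m * K * ρ ^ k := by
    have hr : ε ≤ (k + 1) * h := by nlinarith [k.cast_nonneg (α := ℝ)]
    calc #(s.filter (· ∈ ball x ((k + 1) * h))) * exp (-(k : ℝ))
        ≤ C * ((k + 1) * h / ε) ^ m * exp (-(k : ℝ)) := by gcongr; exact hcard _ hr
      _ = C * (h / ε) ^ m * ((k + 1) ^ m * exp (-(k : ℝ))) := by rw [mul_div_assoc, mul_pow]; ring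
      _ ≤ C * (h / ε) ^ m * (K * exp (-(k / 2 : ℝ))) := by
          gcongr _ * ?_
          exact add_one_pow_mul_exp_neg_le m k.cast_nonneg
      _ = C * (h / ε) ^ m * K * ρ ^ k := by rw [← exp_nat_mul]; ring_nf
  calc ∑ z ∈ s, exp (-(dist z x / h))
      ≤ ∑' k : ℕ, C * (h / ε) ^ m * K * ρ ^ k :=
        s.sum_comp_dist_div_le_tsum x hh (fun u _ v _ huv => exp_le_exp.2 (neg_le_neg huv))
          (fun k => (exp_pos _).le) ((summable_geometric_of_lt_one (exp_pos _).le hρ₁).mul_left _)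
          hshell
    _ = C * (h / ε) ^ m * (K * (1 - ρ)⁻¹) := by
        rw [tsum_mul_left, tsum_geometric_of_lt_one (exp_pos _).le hρ₁]; ring

/-- let `I_ε` be a finite set in `ℝ^d` with the local cardinality bound
`#(I_ε ∩ B(y,s)) ≤ C (s/ε ∨ 1)^{d-1}` for all centers `y` and radii `s > 0`, and let
`q ≥ 0` on `I_ε` satisfy `q(z) ≤ C₁ (ε ∨ √t)^{-d} exp(−|z−x|/(ε ∨ √t))` for some fixed `x`.
Then `∑_{z ∈ I_ε} q(z) ≤ C' ε^{-(d-1)} (ε ∨ √t)^{-1}`, with `C'` depending only on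
`C`, `C₁` and `d`. -/
theorem discrete_surface_heat_kernel_sum (d : ℕ) (hd : 1 ≤ d) (C C₁ : ℝ)
    (hC : 0 < C) (hC₁ : 0 < C₁) :
    ∃ C' : ℝ, 0 < C' ∧
      ∀ (ε t : ℝ) (Iε : Finset (EuclideanSpace ℝ (Fin d)))
        (q : EuclideanSpace ℝ (Fin d) → ℝ) (x : EuclideanSpace ℝ (Fin d)),
        0 < ε → 0 ≤ t →
        (∀ (y : EuclideanSpace ℝ (Fin d)) (s : ℝ), 0 < s →
          ((Iε.filter (· ∈ Metric.ball y s)).card : ℝ) ≤ C * (max (s / ε) 1) ^ (d - 1)) →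
        (∀ z ∈ Iε, 0 ≤ q z) →
        (∀ z ∈ Iε, q z ≤
          C₁ / (max ε (Real.sqrt t)) ^ d * Real.exp (-dist z x / max ε (Real.sqrt t))) →
        ∑ z ∈ Iε, q z ≤ C' / (ε ^ (d - 1) * max ε (Real.sqrt t)) := by
  obtain ⟨m, rfl⟩ : ∃ m, d = m + 1 := ⟨d - 1, by omega⟩
  have hρ₁ : exp (-(1 / 2) : ℝ) < 1 := exp_lt_one_iff.2 (by norm_num)
  refine ⟨C₁ * C * (2 ^ m * m ! * exp (1 / 2) * (1 - exp (-(1 / 2)))⁻¹),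
    by have := sub_pos.2 hρ₁; positivity, ?_⟩
  intro ε t Iε q x hε _ hcard _ hq
  set h := max ε (sqrt t)
  have hh : 0 < h := hε.trans_le (le_max_left _ _)
  have hball (r : ℝ) (hr : ε ≤ r) : (#(Iε.filter (· ∈ ball x r)) : ℝ) ≤ C * (r / ε) ^ m := by
    simpa [max_eq_left ((one_le_div hε).2 hr)] using hcard x r (hε.trans_le hr)
  calc ∑ z ∈ Iε, q z
      ≤ ∑ z ∈ Iε, C₁ / h ^ (m + 1) * exp (-(dist z x / h)) := by
        simpa only [neg_div] using sum_le_sum hq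
    _ = C₁ / h ^ (m + 1) * ∑ z ∈ Iε, exp (-(dist z x / h)) := (mul_sum ..).symm
    _ ≤ C₁ / h ^ (m + 1) *
          (C * (h / ε) ^ m * (2 ^ m * m ! * exp (1 / 2) * (1 - exp (-(1 / 2)))⁻¹)) := by
        gcongr
        exact sum_exp_neg_dist_div_le Iε x hC.le hε (le_max_left _ _) hball
    _ = _ := by rw [add_tsub_cancel_right, div_pow, pow_succ]; field_simp
end
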